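/- Let A be an n×n real symmetric matrix with positive diagonal entries, and let S be a nonempty proper subset of indices. Suppose: (i) A i i > r_i^S(A) for all i ∈ S; (ii) A i i > r_i^{S̄}(A) for all i ∈ S̄; (iii) for all i ∈ S, j ∈ S̄, either (A i i - r_i^S(A))(A j j - r_j^{S̄}(A)) > r_i^{S̄}(A) r_j^S(A) or A i i > r_i(A); (iv) for all i ∈ S̄, j ∈ S, either (A i i - r_i^{S̄}(A))(A j j - r_j^S(A)) > r_i^S(A) r_j^{S̄}(A) or A i i > r_i(A). Then A is positive definite. -/

import Mathlib

/-!
A symmetric matrix is positive definite as soon as it has no eigenvalue `t ≤ 0`, and `A - t • 1`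
with `t ≤ 0` only enlarges the diagonal, so it inherits the hypotheses. Hence it suffices that the
hypotheses force `A *ᵥ x = 0 → x = 0`. Let `m` and `M` be the largest `|x i|` over `S` and over
`Sᶜ`, attained at `p ∈ S` and `q ∈ Sᶜ`. Rows `p` and `q` of `A *ᵥ x = 0` give
`a m ≤ s M` and `b M ≤ t m` with `a = A p p - r_p^S`, `b = A q q - r_q^{S̄}`, `s = r_p^{S̄}`,
`t = r_q^S`; conditions (iii) and (iv) give `s t < a b` (directly, or because `s < a` and `t < b`),
so `a b m ≤ s t m` forces `m = 0` and then `M = 0`.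
-/

/-- `r_i^T(A) = ∑_{j ∈ T, j ≠ i} |A i j|` for a real matrix. -/
def rT {n : ℕ} (A : Matrix (Fin n) (Fin n) ℝ) (T : Finset (Fin n)) (i : Fin n) : ℝ :=
  ∑ j ∈ T.erase i, |A i j|

open Matrix Finset

variable {n : ℕ}

lemma rT_nonneg (A : Matrix (Fin n) (Fin n) ℝ) (T : Finset (Fin n)) (i : Fin n) :
    0 ≤ rT A T i :=
  sum_nonneg fun _ _ => abs_nonneg _

lemma rT_add_diagonal (A : Matrix (Fin n) (Fin n) ℝ) (d : Fin n → ℝ) (T : Finset (Fin n))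
    (i : Fin n) : rT (A + diagonal d) T i = rT A T i :=
  sum_congr rfl fun _ hj => by
    rw [Matrix.add_apply, diagonal_apply_ne _ (ne_of_mem_erase hj).symm, add_zero]

lemma sum_erase_eq_sum_erase_add_sum_erase_compl {α M : Type*} [Fintype α] [DecidableEq α]
    [AddCommMonoid M] (f : α → M) (T : Finset α) (i : α) :
    ∑ j ∈ univ.erase i, f j = ∑ j ∈ T.erase i, f j + ∑ j ∈ Tᶜ.erase i, f j := by
  rw [← sum_union (disjoint_compl_right.mono (erase_subset _ _) (erase_subset _ _)),
    ← erase_union_distrib, union_compl]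

lemma diag_mul_abs_le_of_mulVec_eq_zero {A : Matrix (Fin n) (Fin n) ℝ} {x : Fin n → ℝ}
    (hx : A *ᵥ x = 0) (i : Fin n) {T : Finset (Fin n)} {m M : ℝ}
    (hm : ∀ j ∈ T, |x j| ≤ m) (hM : ∀ j ∈ Tᶜ, |x j| ≤ M) :
    A i i * |x i| ≤ rT A T i * m + rT A Tᶜ i * M := by
  have hrow : A i i * x i = -∑ j ∈ univ.erase i, A i j * x j := by
    rw [eq_neg_iff_add_eq_zero, add_comm, sum_erase_add _ _ (mem_univ i)]
    exact congrFun hx i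
  calc A i i * |x i| ≤ |A i i * x i| := by
        rw [abs_mul]; exact mul_le_mul_of_nonneg_right (le_abs_self _) (abs_nonneg _)
    _ ≤ ∑ j ∈ univ.erase i, |A i j| * |x j| := by
        rw [hrow, abs_neg]; simpa only [abs_mul] using abs_sum_le_sum_abs (fun j => A i j * x j) _
    _ = ∑ j ∈ T.erase i, |A i j| * |x j| + ∑ j ∈ Tᶜ.erase i, |A i j| * |x j| :=
        sum_erase_eq_sum_erase_add_sum_erase_compl _ T i
    _ ≤ rT A T i * m + rT A Tᶜ i * M := by
        rw [rT, rT, sum_mul, sum_mul]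
        gcongr with j hj j hj
        · exact hm j (mem_of_mem_erase hj)
        · exact hM j (mem_of_mem_erase hj)

/-- `S`-strict diagonal dominance (`S`-SDD) in the sense of Cvetković, Kostić and Varga. -/
structure IsSSDD (A : Matrix (Fin n) (Fin n) ℝ) (S : Finset (Fin n)) : Prop where
  rT_lt_diag : ∀ i ∈ S, rT A S i < A i i
  rT_compl_lt_diag : ∀ i ∈ Sᶜ, rT A Sᶜ i < A i i
  mul_lt_mul : ∀ i ∈ S, ∀ j ∈ Sᶜ,
    rT A Sᶜ i * rT A S j < (A i i - rT A S i) * (A j j - rT A Sᶜ j)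

namespace IsSSDD

variable {A : Matrix (Fin n) (Fin n) ℝ} {S : Finset (Fin n)}

theorem of_or (h1 : ∀ i ∈ S, rT A S i < A i i) (h2 : ∀ i ∈ Sᶜ, rT A Sᶜ i < A i i)
    (h3 : ∀ i ∈ S, ∀ j ∈ Sᶜ,
      rT A Sᶜ i * rT A S j < (A i i - rT A S i) * (A j j - rT A Sᶜ j) ∨
      rT A S i + rT A Sᶜ i < A i i)
    (h4 : ∀ i ∈ Sᶜ, ∀ j ∈ S,
      rT A S i * rT A Sᶜ j < (A i i - rT A Sᶜ i) * (A j j - rT A S j) ∨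
      rT A S i + rT A Sᶜ i < A i i) :
    IsSSDD A S := by
  refine ⟨h1, h2, fun i hi j hj => ?_⟩
  rcases h3 i hi j hj with hij | hi_dom
  · exact hij
  rcases h4 j hj i hi with hji | hj_dom
  · linarith
  have hb : 0 < A j j - rT A Sᶜ j := sub_pos.2 (h2 j hj)
  calc rT A Sᶜ i * rT A S j ≤ rT A Sᶜ i * (A j j - rT A Sᶜ j) :=
        mul_le_mul_of_nonneg_left (by linarith) (rT_nonneg A Sᶜ i)
    _ < (A i i - rT A S i) * (A j j - rT A Sᶜ j) :=
        mul_lt_mul_of_pos_right (by linarith) hb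

theorem add_diagonal (h : IsSSDD A S) {d : Fin n → ℝ} (hd : 0 ≤ d) :
    IsSSDD (A + diagonal d) S := by
  have hdiag : ∀ i, A i i ≤ (A + diagonal d) i i := fun i => by
    simpa only [Matrix.add_apply, diagonal_apply_eq] using le_add_of_nonneg_right (hd i)
  obtain ⟨h1, h2, h3⟩ := h
  refine ⟨fun i hi => ?_, fun i hi => ?_, fun i hi j hj => ?_⟩ <;> simp only [rT_add_diagonal]
  · exact (h1 i hi).trans_le (hdiag i)
  · exact (h2 i hi).trans_le (hdiag i)
  · exact (h3 i hi j hj).trans_le <| mul_le_mul (by linarith [hdiag i]) (by linarith [hdiag j])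
      (by linarith [h2 j hj]) (by linarith [hdiag i, h1 i hi])

theorem eq_zero_of_mulVec_eq_zero (h : IsSSDD A S) (hS : S.Nonempty) (hSc : Sᶜ.Nonempty)
    {x : Fin n → ℝ} (hx : A *ᵥ x = 0) : x = 0 := by
  obtain ⟨p, hpS, hp⟩ := S.exists_max_image (fun i => |x i|) hS
  obtain ⟨q, hqS, hq⟩ := Sᶜ.exists_max_image (fun i => |x i|) hSc
  have hrow_p := diag_mul_abs_le_of_mulVec_eq_zero hx p hp hq
  have hrow_q := diag_mul_abs_le_of_mulVec_eq_zero hx q (T := Sᶜ) hq (by rwa [compl_compl])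
  rw [compl_compl] at hrow_q
  have ha := sub_pos.2 (h.rT_lt_diag p hpS)
  have hb := sub_pos.2 (h.rT_compl_lt_diag q hqS)
  have hst := h.mul_lt_mul p hpS q hqS
  have hs := rT_nonneg A Sᶜ p
  have ht := rT_nonneg A S q
  have hm := abs_nonneg (x p)
  have hM := abs_nonneg (x q)
  have hm0 : |x p| = 0 := by nlinarith
  have hM0 : |x q| = 0 := by nlinarith
  funext k
  rw [Pi.zero_apply, ← abs_nonpos_iff]
  by_cases hk : k ∈ S
  · exact hm0 ▸ hp k hk
  · exact hM0 ▸ hq k (mem_compl.2 hk)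

end IsSSDD

theorem Matrix.IsHermitian.posDef_of_eq_zero_of_mulVec_eq_smul {ι : Type*} [Fintype ι]
    [DecidableEq ι] {A : Matrix ι ι ℝ} (hA : A.IsHermitian)
    (h : ∀ t ≤ (0 : ℝ), ∀ x, A *ᵥ x = t • x → x = 0) : A.PosDef := by
  refine hA.posDef_iff_eigenvalues_pos.2 fun i => ?_
  by_contra! hle
  exact hA.eigenvectorBasis.toBasis.ne_zero i
    (by ext j; exact congrFun (h _ hle _ (hA.mulVec_eigenvectorBasis i)) j)

theorem stmt_6_general {n : ℕ} (A : Matrix (Fin n) (Fin n) ℝ) (hsym : A.IsSymm)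
    (S : Finset (Fin n)) (hS : S.Nonempty) (hSc : Sᶜ.Nonempty)
    (h1 : ∀ i ∈ S, rT A S i < A i i)
    (h2 : ∀ i ∈ Sᶜ, rT A Sᶜ i < A i i)
    (h3 : ∀ i ∈ S, ∀ j ∈ Sᶜ,
      rT A Sᶜ i * rT A S j < (A i i - rT A S i) * (A j j - rT A Sᶜ j) ∨
      rT A S i + rT A Sᶜ i < A i i)
    (h4 : ∀ i ∈ Sᶜ, ∀ j ∈ S,
      rT A S i * rT A Sᶜ j < (A i i - rT A Sᶜ i) * (A j j - rT A S j) ∨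
      rT A S i + rT A Sᶜ i < A i i) :
    A.PosDef := by
  have hA : IsSSDD A S := .of_or h1 h2 h3 h4
  refine (isHermitian_iff_isSymm.2 hsym).posDef_of_eq_zero_of_mulVec_eq_smul fun t ht x hx => ?_
  have hshift : IsSSDD (A + diagonal fun _ => -t) S := hA.add_diagonal fun _ => neg_nonneg.2 ht
  refine hshift.eq_zero_of_mulVec_eq_zero hS hSc ?_
  funext i
  simp [add_mulVec, hx]

theorem stmt_6 {n : ℕ} (hn : 2 ≤ n) (A : Matrix (Fin n) (Fin n) ℝ) (hsym : A.IsSymm)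
    (hdiag : ∀ k, 0 < A k k)
    (S : Finset (Fin n)) (hS : S.Nonempty) (hSc : Sᶜ.Nonempty)
    (h1 : ∀ i ∈ S, rT A S i < A i i)
    (h2 : ∀ i ∈ Sᶜ, rT A Sᶜ i < A i i)
    (h3 : ∀ i ∈ S, ∀ j ∈ Sᶜ,
      rT A Sᶜ i * rT A S j < (A i i - rT A S i) * (A j j - rT A Sᶜ j) ∨
      rT A S i + rT A Sᶜ i < A i i)
    (h4 : ∀ i ∈ Sᶜ, ∀ j ∈ S,
      rT A S i * rT A Sᶜ j < (A i i - rT A Sᶜ i) * (A j j - rT A S j) ∨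
      rT A S i + rT A Sᶜ i < A i i) :
    A.PosDef :=
  stmt_6_general A hsym S hS hSc h1 h2 h3 h4
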